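/- arXiv:2007.00445 — 7 statements merged into one kernel-verified Lean document; each statement's English description precedes it below -/
import Mathlib

section
/- Let F be a field, d, m, l, n natural numbers, and let (x_i, y_i), i = 1,…,n, be n points in F². If (m+1)(l+1) + d·(l+1 choose 2) > n, then there exists a bivariate polynomial P ∈ F[x,y], not identically zero, whose (1,d)-weighted degree is at most m + l·d, such that P(x_i, y_i) = 0 for all i = 1,…,n. -/
open MvPolynomial

/-- **Proposition 2.** If `(m+1)(l+1) + d·C(l+1,2) > n`, then there exists a nonzero
bivariate polynomial `P ∈ F[x,y]` of `(1,d)`-weighted degree at most `m + l·d`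
vanishing at all `n` given points. -/
theorem exists_nonzero_vanishing_poly_of_weighted_degree_le
    (F : Type*) [Field F] (d m l n : ℕ) (x y : Fin n → F)
    (hcount : (m + 1) * (l + 1) + d * Nat.choose (l + 1) 2 > n) :
    ∃ P : MvPolynomial (Fin 2) F, P ≠ 0 ∧
      P.weightedTotalDegree ![1, d] ≤ m + l * d ∧
      ∀ i : Fin n, MvPolynomial.eval ![x i, y i] P = 0 := by
  classical
  -- the index type of monomials x^i y^j with j ≤ l and i ≤ m + (l-j)·d
  let I := Σ j : Fin (l + 1), Fin (m + (l - (j : ℕ)) * d + 1)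
  have hcard : Fintype.card I = (m + 1) * (l + 1) + d * Nat.choose (l + 1) 2 := by
    rw [Fintype.card_sigma]
    simp only [Fintype.card_fin]
    rw [Fin.sum_univ_eq_sum_range (fun j => m + (l - j) * d + 1) (l + 1)]
    have h3 : ∑ j ∈ Finset.range (l + 1), (l - j) = ∑ j ∈ Finset.range (l + 1), j := by
      have := Finset.sum_range_reflect (fun j => j) (l + 1)
      simpa using this
    calc ∑ j ∈ Finset.range (l + 1), (m + (l - j) * d + 1)
        = (l + 1) * (m + 1) + (∑ j ∈ Finset.range (l + 1), (l - j)) * d := by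
          rw [Finset.sum_add_distrib, Finset.sum_add_distrib, ← Finset.sum_mul]
          simp [Finset.sum_const, Finset.card_range, mul_add, mul_comm, add_comm,
            add_assoc, add_left_comm]
      _ = (m + 1) * (l + 1) + d * Nat.choose (l + 1) 2 := by
          rw [h3, Finset.sum_range_id, Nat.choose_two_right]
          simp [mul_comm]
  -- the exponent of the monomial indexed by s
  let expo : I → (Fin 2 →₀ ℕ) := fun s => Finsupp.single 0 (s.2 : ℕ) + Finsupp.single 1 (s.1 : ℕ)
  have hinj : Function.Injective expo := by
    rintro ⟨j, i⟩ ⟨j', i'⟩ h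
    have h0 := DFunLike.congr_fun h 0
    have h1 := DFunLike.congr_fun h 1
    simp only [expo, Finsupp.add_apply, Finsupp.single_apply] at h0 h1
    norm_num at h0 h1
    have hj : j = j' := Fin.ext h1
    subst hj
    have hi : i = i' := Fin.ext h0
    subst hi
    rfl
  -- the evaluation linear map
  let L : (I → F) →ₗ[F] (Fin n → F) :=
    { toFun := fun c k => MvPolynomial.eval ![x k, y k] (∑ s : I, monomial (expo s) (c s))
      map_add' := by
        intro a b
        funext k
        simp [Finset.sum_add_distrib]
      map_smul' := by
        intro a c
        funext k
        simp only [Pi.smul_apply, smul_eq_mul, RingHom.id_apply]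
        rw [show (∑ s : I, monomial (expo s) (a * c s))
            = a • ∑ s : I, monomial (expo s) (c s) by
          rw [Finset.smul_sum]
          exact Finset.sum_congr rfl fun s _ => by rw [MvPolynomial.smul_monomial, smul_eq_mul]]
        simp [smul_eq_mul] }
  -- L is not injective by dimension count
  have hn : ¬ Function.Injective L := by
    intro hL
    have h1 := LinearMap.finrank_le_finrank_of_injective hL
    rw [Module.finrank_fintype_fun_eq_card, Module.finrank_fintype_fun_eq_card,
      hcard, Fintype.card_fin] at h1
    omega
  rw [Function.not_injective_iff] at hn
  obtain ⟨a, b, hab, hne⟩ := hn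
  set c : I → F := a - b with hc
  have hc0 : c ≠ 0 := sub_ne_zero.mpr hne
  have hLc : L c = 0 := by
    rw [hc, map_sub, hab, sub_self]
  set P : MvPolynomial (Fin 2) F := ∑ s : I, monomial (expo s) (c s) with hP
  have hcoeff : ∀ e, MvPolynomial.coeff e P = ∑ s : I, if expo s = e then c s else 0 := by
    intro e
    rw [hP, MvPolynomial.coeff_sum]
    exact Finset.sum_congr rfl fun s _ => MvPolynomial.coeff_monomial e (expo s) (c s)
  refine ⟨P, ?_, ?_, ?_⟩
  · -- P ≠ 0
    obtain ⟨s0, hs0⟩ := Function.ne_iff.mp hc0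
    intro h0
    apply hs0
    have := hcoeff (expo s0)
    rw [h0, MvPolynomial.coeff_zero] at this
    rw [Finset.sum_eq_single_of_mem s0 (Finset.mem_univ s0)
      (fun s _ hs => if_neg fun h => hs (hinj h))] at this
    · simpa using this.symm
  · -- weighted degree bound
    apply Finset.sup_le
    intro e he
    rw [MvPolynomial.mem_support_iff, hcoeff e] at he
    obtain ⟨s, -, hs⟩ := Finset.exists_ne_zero_of_sum_ne_zero he
    have hse : expo s = e := by
      by_contra h
      simp [h] at hs
    subst hse
    obtain ⟨j, i⟩ := s
    have hw : (Finsupp.weight ![1, d]) (expo ⟨j, i⟩) = (i : ℕ) + (j : ℕ) * d := by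
      rw [show expo ⟨j, i⟩ = Finsupp.single 0 (i : ℕ) + Finsupp.single 1 (j : ℕ) from rfl,
        map_add]
      simp [Finsupp.weight_apply, Finsupp.sum_single_index]
    rw [hw]
    have hi : (i : ℕ) ≤ m + (l - (j : ℕ)) * d := Nat.lt_succ_iff.mp i.isLt
    have hj : (j : ℕ) ≤ l := Nat.lt_succ_iff.mp j.isLt
    have hld : (l - (j : ℕ)) * d + (j : ℕ) * d = l * d := by
      rw [← Nat.add_mul, Nat.sub_add_cancel hj]
    omega
  · -- vanishing
    intro k
    have := congrFun hLc k
    simpa [L, hP] using this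
end

section
/- Let F be a field, d, m, l, t, n natural numbers with t > m + l·d, and let (x_i, y_i), i = 1,…,n, be n points in F². Suppose P ∈ F[x,y] is not identically zero, has (1,d)-weighted degree at most m + l·d, and satisfies P(x_i, y_i) = 0 for all i = 1,…,n. If f ∈ F[x] has degree at most d and f(x_i) = y_i for at least t indices i with the corresponding x_i pairwise distinct, then the polynomial y − f(x) divides P(x,y) in F[x,y]. -/
open MvPolynomial

/-- **Proposition 3.** If `t > m + l·d`, `P` is a nonzero bivariate polynomial of
`(1,d)`-weighted degree at most `m + l·d` vanishing at all the points `(xᵢ, yᵢ)`,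
and `f` has degree at most `d` and agrees with the data (`f(xᵢ) = yᵢ`) on at least
`t` indices whose `x`-coordinates are pairwise distinct, then `y - f(x)` divides
`P(x,y)` in `F[x,y]`. -/
theorem linear_factor_dvd_of_many_agreements
    (F : Type*) [Field F] (d m l t n : ℕ) (ht : t > m + l * d)
    (x y : Fin n → F) (P : MvPolynomial (Fin 2) F)
    (hP0 : P ≠ 0)
    (hPdeg : P.weightedTotalDegree ![1, d] ≤ m + l * d)
    (hPvan : ∀ i : Fin n, MvPolynomial.eval ![x i, y i] P = 0)
    (f : Polynomial F) (hf : f.natDegree ≤ d)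
    (hagree : ∃ s : Finset (Fin n), t ≤ s.card ∧ Set.InjOn x s ∧
      ∀ i ∈ s, f.eval (x i) = y i) :
    (MvPolynomial.X 1 - Polynomial.aeval (MvPolynomial.X 0 : MvPolynomial (Fin 2) F) f) ∣ P := by
  classical
  obtain ⟨s, hst, hinj, hsy⟩ := hagree
  -- the univariate substitution Q(X) = P(X, f(X))
  set Q : Polynomial F := MvPolynomial.aeval ![Polynomial.X, f] P with hQ
  -- degree bound on Q
  have hQdeg : Q.natDegree ≤ m + l * d := by
    rw [hQ, MvPolynomial.aeval_def, MvPolynomial.eval₂_eq]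
    apply Polynomial.natDegree_sum_le_of_forall_le
    intro u hu
    have hw : (Finsupp.weight ![1, d]) u ≤ m + l * d :=
      le_trans (MvPolynomial.le_weightedTotalDegree _ hu) hPdeg
    calc (algebraMap F (Polynomial F) (MvPolynomial.coeff u P) *
            ∏ i ∈ u.support, (![Polynomial.X, f] : Fin 2 → Polynomial F) i ^ u i).natDegree
        ≤ (algebraMap F (Polynomial F) (MvPolynomial.coeff u P)).natDegree +
            (∏ i ∈ u.support, (![Polynomial.X, f] : Fin 2 → Polynomial F) i ^ u i).natDegree :=
          Polynomial.natDegree_mul_le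
      _ ≤ 0 + ∑ i ∈ u.support, ((![Polynomial.X, f] : Fin 2 → Polynomial F) i ^ u i).natDegree := by
          gcongr
          · exact le_of_eq (Polynomial.natDegree_C _)
          · exact Polynomial.natDegree_prod_le _ _
      _ ≤ ∑ i ∈ u.support, u i * (![1, d] : Fin 2 → ℕ) i := by
          rw [zero_add]
          apply Finset.sum_le_sum
          intro i _
          refine le_trans (Polynomial.natDegree_pow_le) ?_
          gcongr
          fin_cases i
          · simp
          · simpa using hf
      _ = (Finsupp.weight ![1, d]) u := by
          rw [Finsupp.weight_apply, Finsupp.sum]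
          simp [smul_eq_mul]
      _ ≤ m + l * d := hw
  -- Q vanishes at the (distinct) points x i, i ∈ s
  have hroot : ∀ i ∈ s, Polynomial.eval (x i) Q = 0 := by
    intro i hi
    have : (Polynomial.aeval (x i)) Q = 0 := by
      rw [hQ]
      have hcomp : (Polynomial.aeval (x i)).comp (MvPolynomial.aeval ![Polynomial.X, f])
          = MvPolynomial.aeval ![x i, y i] := by
        apply MvPolynomial.algHom_ext
        intro j
        fin_cases j
        · simp
        · simp [hsy i hi]
      have := congrArg (fun g => g P) hcomp
      simpa [MvPolynomial.aeval_def, MvPolynomial.eval] using this.trans (by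
        simpa [MvPolynomial.aeval_def] using hPvan i)
    simpa using this
  -- Q = 0
  have hQ0 : Q = 0 := by
    by_contra hQne
    have hsub : s.image x ⊆ Q.roots.toFinset := by
      intro a ha
      obtain ⟨i, hi, rfl⟩ := Finset.mem_image.mp ha
      rw [Multiset.mem_toFinset, Polynomial.mem_roots hQne]
      exact hroot i hi
    have h1 : t ≤ (s.image x).card := by
      rwa [Finset.card_image_of_injOn hinj]
    have h2 : (s.image x).card ≤ Q.roots.toFinset.card := Finset.card_le_card hsub
    have h3 : Q.roots.toFinset.card ≤ Multiset.card Q.roots := Multiset.toFinset_card_le _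
    have h4 : Multiset.card Q.roots ≤ Q.natDegree := Polynomial.card_roots' Q
    omega
  -- conclude divisibility via the quotient by the ideal (y - f(x))
  set g : MvPolynomial (Fin 2) F :=
    MvPolynomial.X 1 - Polynomial.aeval (MvPolynomial.X 0 : MvPolynomial (Fin 2) F) f with hg
  rw [← Ideal.mem_span_singleton]
  set I := Ideal.span {g} with hI
  have hgI : g ∈ I := Ideal.subset_span rfl
  -- the substitution endomorphism σ
  set σ : MvPolynomial (Fin 2) F →ₐ[F] MvPolynomial (Fin 2) F :=
    MvPolynomial.aeval ![MvPolynomial.X 0,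
      Polynomial.aeval (MvPolynomial.X 0 : MvPolynomial (Fin 2) F) f] with hσ
  have hσP : σ P = 0 := by
    have hcomp : (Polynomial.aeval (MvPolynomial.X 0 : MvPolynomial (Fin 2) F)).comp
        (MvPolynomial.aeval ![Polynomial.X, f]) = σ := by
      apply MvPolynomial.algHom_ext
      intro j
      fin_cases j <;> simp [hσ]
    have := congrArg (fun h => h P) hcomp
    simp only [AlgHom.comp_apply] at this
    rw [← this, ← hQ, hQ0, map_zero]
  have hq : (Ideal.Quotient.mkₐ F I).comp σ = Ideal.Quotient.mkₐ F I := by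
    apply MvPolynomial.algHom_ext
    intro j
    fin_cases j
    · simp [hσ]
    · simp only [AlgHom.comp_apply, hσ]
      rw [MvPolynomial.aeval_X]
      simp only [Matrix.cons_val_one, Matrix.head_cons, Ideal.Quotient.mkₐ_eq_mk]
      rw [Ideal.Quotient.eq]
      simpa [hg] using (neg_mem hgI : -g ∈ I)
  have hP' := congrArg (fun h => h P) hq
  simp only [AlgHom.comp_apply, hσP, map_zero, Ideal.Quotient.mkₐ_eq_mk] at hP'
  rw [← Ideal.Quotient.eq_zero_iff_mem]
  exact hP'.symm
end

section
/- Let F be a field, d, m, l, t natural numbers with t > m + l·d, P ∈ F[x,y] a bivariate polynomial of (1,d)-weighted degree at most m + l·d, and f ∈ F[x] a univariate polynomial of degree at most d. If there are at least t pairwise distinct elements a ∈ F with P(a, f(a)) = 0, then the univariate polynomial x ↦ P(x, f(x)) is identically zero. -/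
open MvPolynomial

/-- If `t > m + l·d`, `P ∈ F[x,y]` has `(1,d)`-weighted degree at most `m + l·d`,
`f ∈ F[x]` has degree at most `d`, and `P(a, f(a)) = 0` for at least `t` pairwise
distinct elements `a ∈ F`, then the univariate polynomial `x ↦ P(x, f(x))` is
identically zero. -/
theorem subst_eq_zero_of_many_roots
    (F : Type*) [Field F] (d m l t : ℕ) (ht : t > m + l * d)
    (P : MvPolynomial (Fin 2) F)
    (hPdeg : P.weightedTotalDegree ![1, d] ≤ m + l * d)
    (f : Polynomial F) (hf : f.natDegree ≤ d)
    (hroots : ∃ s : Finset F, t ≤ s.card ∧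
      ∀ a ∈ s, MvPolynomial.eval ![a, f.eval a] P = 0) :
    MvPolynomial.aeval ![Polynomial.X, f] P = 0 := by
  classical
  obtain ⟨s, hs, hz⟩ := hroots
  set Q := MvPolynomial.aeval ![Polynomial.X, f] P with hQ
  -- degree bound
  have hdeg : Q.natDegree ≤ m + l * d := by
    rw [hQ, MvPolynomial.aeval_def, MvPolynomial.eval₂_eq']
    apply Polynomial.natDegree_sum_le_of_forall_le
    intro v hv
    have hw : v 0 + v 1 * d ≤ m + l * d := by
      have := MvPolynomial.le_weightedTotalDegree ![1, d] hv
      refine le_trans (le_of_eq ?_) (this.trans hPdeg)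
      rw [Finsupp.weight_apply]
      rw [Finsupp.sum_fintype]
      · simp [Fin.sum_univ_two, mul_comm]
      · intro i; simp
    calc Polynomial.natDegree
          (algebraMap F (Polynomial F) (MvPolynomial.coeff v P)
            * ∏ i, (![Polynomial.X, f] i) ^ v i)
        ≤ Polynomial.natDegree (algebraMap F (Polynomial F) (MvPolynomial.coeff v P))
          + Polynomial.natDegree (∏ i, (![Polynomial.X, f] i) ^ v i) :=
          Polynomial.natDegree_mul_le
      _ ≤ 0 + (v 0 + v 1 * d) := by
          gcongr
          · exact le_of_eq (Polynomial.natDegree_C _)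
          · rw [Fin.prod_univ_two]
            refine Polynomial.natDegree_mul_le.trans ?_
            gcongr
            · simp [Polynomial.natDegree_X_pow]
            · have hp := Polynomial.natDegree_pow_le (p := ![Polynomial.X, f] 1) (n := v 1)
              refine hp.trans ?_
              simp only [Matrix.cons_val_one, Matrix.head_cons]
              exact Nat.mul_le_mul_left _ hf
      _ ≤ m + l * d := by simpa using hw
  -- evaluation
  have heval : ∀ a ∈ s, Q.eval a = 0 := by
    intro a ha
    have hcomp : (Polynomial.aeval a).comp (MvPolynomial.aeval ![Polynomial.X, f])
        = MvPolynomial.aeval (![a, f.eval a] : Fin 2 → F) := by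
      apply MvPolynomial.algHom_ext
      intro i
      fin_cases i <;> simp
    have h2 : Polynomial.aeval a Q = MvPolynomial.aeval (![a, f.eval a] : Fin 2 → F) P := by
      rw [hQ, ← hcomp]; rfl
    have h3 : MvPolynomial.aeval (![a, f.eval a] : Fin 2 → F) P
        = MvPolynomial.eval ![a, f.eval a] P :=
      congrFun (congrArg DFunLike.coe (MvPolynomial.coe_aeval_eq_eval (![a, f.eval a] : Fin 2 → F))) P
    have h4 : Q.eval a = Polynomial.aeval a Q :=
      (congrFun (Polynomial.coe_aeval_eq_eval a) Q).symm
    rw [h4, h2, h3]; exact hz a ha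
  exact Polynomial.eq_zero_of_natDegree_lt_card_of_eval_eq_zero' Q s heval
    (lt_of_le_of_lt (Nat.lt_succ_iff.mp (Nat.lt_succ_of_le hdeg)) (lt_of_lt_of_le ht hs))
end

section
/- Let F be a field, H a finite subset of F with |H| = h, k ≥ 1, d ≥ 1, l ≥ 1, m natural numbers with m + l·d ≥ k·(h − 1), and g : H^k → F a function. Then there exists a polynomial P ∈ F[x₁,…,x_k, y], not identically zero, whose (1,…,1,d)-weighted degree is at most m + l·d, such that P(a, g(a)) = 0 for every a ∈ H^k. -/
/-!
Interpolate `g` on the grid `H^k` by a polynomial `Q(x)`: the sum of `g(t)` times the product of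
the univariate Lagrange basis polynomials at the coordinates of `t` has total degree at most
`k(h-1)`. Then `P = y - Q(x)` is nonzero, vanishes at every `(a, g(a))`, and its weighted degree
is at most `max(d, k(h-1)) ≤ m + l·d`.
-/

open MvPolynomial

namespace MvPolynomial

theorem totalDegree_toMvPolynomial_le {R σ : Type*} [CommSemiring R] (p : Polynomial R) (i : σ) :
    (p.toMvPolynomial i).totalDegree ≤ p.natDegree := by
  rw [Polynomial.toMvPolynomial, Polynomial.aeval_eq_sum_range]
  refine (totalDegree_finsetSum _ _).trans (Finset.sup_le fun n hn => ?_)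
  rw [X_pow_eq_monomial, smul_monomial]
  refine (totalDegree_monomial_le _ _).trans ?_
  rw [Finsupp.sum_single_index rfl]
  exact Nat.lt_succ_iff.1 (Finset.mem_range.1 hn)

section

variable {R σ M : Type*} [CommRing R] [AddCommMonoid M] [SemilatticeSup M] [OrderBot M]

theorem weightedTotalDegree_sub_le (w : σ → M) (p q : MvPolynomial σ R) :
    weightedTotalDegree w (p - q) ≤ weightedTotalDegree w p ⊔ weightedTotalDegree w q := by
  classical
  refine Finset.sup_le fun s hs => ?_
  rcases Finset.mem_union.1 (support_sub σ p q hs) with hp | hq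
  · exact le_sup_of_le_left (le_weightedTotalDegree w hp)
  · exact le_sup_of_le_right (le_weightedTotalDegree w hq)

theorem weightedTotalDegree_X [Nontrivial R] (w : σ → M) (i : σ) :
    weightedTotalDegree w (X i : MvPolynomial σ R) = w i := by
  have := (isWeightedHomogeneous_X R w i).weighted_total_degree (X_ne_zero i)
  rwa [weightedTotalDegree_coe w _ (X_ne_zero i), WithBot.coe_inj] at this

theorem X_sub_rename_ne_zero [Nontrivial R] {τ : Type*} {f : σ → τ} {j : τ}
    (hj : j ∉ Set.range f) (p : MvPolynomial σ R) : X j - rename f p ≠ 0 := by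
  classical
  refine sub_ne_zero.2 fun h => hj ?_
  have hvars := vars_rename f p
  rw [← h, vars_X, Finset.singleton_subset_iff, Finset.mem_image] at hvars
  obtain ⟨i, -, hi⟩ := hvars
  exact ⟨i, hi⟩

end

section GridInterpolation

variable {σ F : Type*} [Fintype σ] [Field F] [DecidableEq F]

noncomputable def gridLagrangeBasis (S : σ → Finset F) (t : σ → F) : MvPolynomial σ F :=
  ∏ i, (Lagrange.basis (S i) id (t i)).toMvPolynomial i

theorem eval_gridLagrangeBasis (S : σ → Finset F) (t : σ → F) (a : σ → F) :
    eval a (gridLagrangeBasis S t) = ∏ i, (Lagrange.basis (S i) id (t i)).eval (a i) := by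
  simp only [gridLagrangeBasis, map_prod, eval_toMvPolynomial]

variable [DecidableEq σ]

theorem eval_gridLagrangeBasis_self {S : σ → Finset F} {t : σ → F}
    (ht : t ∈ Fintype.piFinset S) : eval t (gridLagrangeBasis S t) = 1 := by
  rw [eval_gridLagrangeBasis]
  exact Finset.prod_eq_one fun i _ =>
    Lagrange.eval_basis_self (Set.injOn_id _) (Fintype.mem_piFinset.1 ht i)

theorem eval_gridLagrangeBasis_of_ne {S : σ → Finset F} {t a : σ → F}
    (ha : a ∈ Fintype.piFinset S) (hta : t ≠ a) : eval a (gridLagrangeBasis S t) = 0 := by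
  obtain ⟨i, hi⟩ := Function.ne_iff.1 hta
  rw [eval_gridLagrangeBasis]
  exact Finset.prod_eq_zero (Finset.mem_univ i)
    (Lagrange.eval_basis_of_ne (v := id) hi (Fintype.mem_piFinset.1 ha i))

theorem totalDegree_gridLagrangeBasis_le {S : σ → Finset F} {t : σ → F}
    (ht : t ∈ Fintype.piFinset S) :
    (gridLagrangeBasis S t).totalDegree ≤ ∑ i, ((S i).card - 1) := by
  refine (totalDegree_finsetProd _ _).trans (Finset.sum_le_sum fun i _ => ?_)
  refine (totalDegree_toMvPolynomial_le _ i).trans_eq ?_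
  exact Lagrange.natDegree_basis (Set.injOn_id _) (Fintype.mem_piFinset.1 ht i)

noncomputable def gridInterpolate (S : σ → Finset F) (g : (σ → F) → F) :
    MvPolynomial σ F :=
  ∑ t ∈ Fintype.piFinset S, C (g t) * gridLagrangeBasis S t

theorem eval_gridInterpolate {S : σ → Finset F} (g : (σ → F) → F) {a : σ → F}
    (ha : a ∈ Fintype.piFinset S) : eval a (gridInterpolate S g) = g a := by
  rw [gridInterpolate, map_sum, Finset.sum_eq_single_of_mem a ha]
  · rw [map_mul, eval_C, eval_gridLagrangeBasis_self ha, mul_one]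
  · intro t _ hta
    rw [map_mul, eval_gridLagrangeBasis_of_ne ha hta, mul_zero]

theorem totalDegree_gridInterpolate_le (S : σ → Finset F) (g : (σ → F) → F) :
    (gridInterpolate S g).totalDegree ≤ ∑ i, ((S i).card - 1) := by
  refine (totalDegree_finsetSum _ _).trans (Finset.sup_le fun t ht => ?_)
  refine (totalDegree_mul _ _).trans ?_
  rw [totalDegree_C, zero_add]
  exact totalDegree_gridLagrangeBasis_le ht

end GridInterpolation

end MvPolynomial

theorem exists_nonzero_vanishing_multivariate_poly_general
    (F : Type*) [Field F] (H : Finset F) (h k d l m : ℕ)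
    (hH : H.card = h) (hl : 1 ≤ l)
    (hdeg : m + l * d ≥ k * (h - 1))
    (g : (Fin k → F) → F) :
    ∃ P : MvPolynomial (Fin (k + 1)) F, P ≠ 0 ∧
      P.weightedTotalDegree (Fin.snoc (fun _ : Fin k => 1) d) ≤ m + l * d ∧
      ∀ a : Fin k → F, (∀ i, a i ∈ H) →
        MvPolynomial.eval (Fin.snoc a (g a)) P = 0 := by
  classical
  set Q := gridInterpolate (fun _ : Fin k => H) g
  have hweight : (Fin.snoc (fun _ : Fin k => 1) d : Fin (k + 1) → ℕ) ∘ Fin.castSucc = 1 := by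
    funext i; simp
  refine ⟨X (Fin.last k) - rename Fin.castSucc Q,
    X_sub_rename_ne_zero (fun ⟨i, hi⟩ => Fin.castSucc_ne_last i hi) Q, ?_, fun a ha => ?_⟩
  · refine (weightedTotalDegree_sub_le _ _ _).trans (sup_le ?_ ?_)
    · rw [weightedTotalDegree_X, Fin.snoc_last]
      exact le_add_left (Nat.le_mul_of_pos_left d hl)
    · rw [weightedTotalDegree_rename_of_injective (Fin.castSucc_injective k), hweight,
        weightedTotalDegree_one]
      calc Q.totalDegree ≤ ∑ _i : Fin k, (H.card - 1) := totalDegree_gridInterpolate_le _ g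
        _ = k * (h - 1) := by simp [hH]
        _ ≤ m + l * d := hdeg
  · have hcomp : (Fin.snoc a (g a) : Fin (k + 1) → F) ∘ Fin.castSucc = a := by
      funext i; simp
    rw [map_sub, eval_X, eval_rename, hcomp, Fin.snoc_last,
      eval_gridInterpolate g (Fintype.mem_piFinset.2 ha), sub_self]

/-- **Proposition 4.** If `m + l·d ≥ k·(h−1)` (with `k, d, l ≥ 1` and `|H| = h`), then for
any `g : H^k → F` there is a nonzero polynomial `P ∈ F[x₁,…,x_k,y]` of
`(1,…,1,d)`-weighted degree at most `m + l·d` vanishing at `(a, g(a))` for all `a ∈ H^k`. -/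
theorem exists_nonzero_vanishing_multivariate_poly
    (F : Type*) [Field F] (H : Finset F) (h k d l m : ℕ)
    (hH : H.card = h) (hk : 1 ≤ k) (hd : 1 ≤ d) (hl : 1 ≤ l)
    (hdeg : m + l * d ≥ k * (h - 1))
    (g : (Fin k → F) → F) :
    ∃ P : MvPolynomial (Fin (k + 1)) F, P ≠ 0 ∧
      P.weightedTotalDegree (Fin.snoc (fun _ : Fin k => 1) d) ≤ m + l * d ∧
      ∀ a : Fin k → F, (∀ i, a i ∈ H) →
        MvPolynomial.eval (Fin.snoc a (g a)) P = 0 :=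
  exists_nonzero_vanishing_multivariate_poly_general F H h k d l m hH hl hdeg g
end

section
/- Let F be a field, H a finite subset of F with |H| = h, and k, d, m, l, t natural numbers with t > (m + l·d)·h^{k−1}. Let g : H^k → F be a function, let P ∈ F[x₁,…,x_k, y] be not identically zero with (1,…,1,d)-weighted degree at most m + l·d and P(a, g(a)) = 0 for all a ∈ H^k, and let f ∈ F[x₁,…,x_k] have total degree at most d. If f(a) = g(a) for at least t points a ∈ H^k, then the polynomial y − f(x₁,…,x_k) divides P(x₁,…,x_k, y) in F[x₁,…,x_k, y]. -/
/-!
Substituting `y = f` turns `P` into `Q(x) = P(x, f(x))`, whose total degree is at most the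
`(1,…,1,d)`-weighted degree of `P`. Since `P(a, g(a)) = 0`, `Q` vanishes wherever `f` agrees
with `g`, i.e. on more than `(m + l·d)·h^{k-1}` points of `H^k`, so `Q = 0` by Schwartz–Zippel.
Finally `P ≡ Q` modulo `y - f`, hence `y - f ∣ P`.
-/

open MvPolynomial Finset

namespace MvPolynomial

variable {R σ τ : Type*} [CommRing R]

theorem totalDegree_bind₁_le_weightedTotalDegree {φ : σ → MvPolynomial τ R} {w : σ → ℕ}
    (hφ : ∀ i, (φ i).totalDegree ≤ w i) (P : MvPolynomial σ R) :
    (bind₁ φ P).totalDegree ≤ P.weightedTotalDegree w := by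
  conv_lhs => rw [P.as_sum]
  rw [map_sum]
  refine totalDegree_finsetSum_le fun u hu => ?_
  calc (bind₁ φ (monomial u (P.coeff u))).totalDegree
      ≤ (C (P.coeff u)).totalDegree + (∏ i ∈ u.support, φ i ^ u i).totalDegree := by
        rw [bind₁_monomial]
        exact totalDegree_mul _ _
    _ ≤ ∑ i ∈ u.support, (φ i ^ u i).totalDegree := by
        rw [totalDegree_C, zero_add]
        exact totalDegree_finsetProd _ _
    _ ≤ ∑ i ∈ u.support, u i * w i :=
        sum_le_sum fun i _ => (totalDegree_pow _ _).trans (Nat.mul_le_mul_left _ (hφ i))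
    _ = Finsupp.weight w u := by
        rw [Finsupp.weight_apply, Finsupp.sum]; simp only [smul_eq_mul]
    _ ≤ P.weightedTotalDegree w := le_weightedTotalDegree w hu

theorem X_sub_dvd_sub_bind₁_update [DecidableEq σ] (P g : MvPolynomial σ R) (i : σ) :
    X i - g ∣ P - bind₁ (Function.update X i g) P := by
  rw [← Ideal.mem_span_singleton, ← Ideal.Quotient.eq]
  let π := Ideal.Quotient.mkₐ R (Ideal.span {X i - g})
  suffices π.comp (AlgHom.id R _) = π.comp (bind₁ (Function.update X i g)) from
    DFunLike.congr_fun this P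
  refine algHom_ext fun j => ?_
  obtain rfl | hj := eq_or_ne j i
  · simp [π, Ideal.Quotient.mkₐ_eq_mk, Ideal.Quotient.eq]
  · simp [Function.update_of_ne hj]

theorem X_last_sub_rename_dvd_of_bind₁_snoc_eq_zero {n : ℕ} {f : MvPolynomial (Fin n) R}
    {P : MvPolynomial (Fin (n + 1)) R} (hP : bind₁ (Fin.snoc X f) P = 0) :
    X (Fin.last n) - rename Fin.castSucc f ∣ P := by
  have hsubst : bind₁ (Function.update X (Fin.last n) (rename Fin.castSucc f)) P =
      rename Fin.castSucc (bind₁ (Fin.snoc X f) P) := by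
    rw [rename_bind₁]
    congr 2
    funext i
    refine Fin.lastCases ?_ (fun j => ?_) i <;> simp
  simpa only [hsubst, hP, map_zero, sub_zero] using
    X_sub_dvd_sub_bind₁_update P (rename Fin.castSucc f) (Fin.last n)

theorem eval_bind₁_snoc_X {n : ℕ} (f : MvPolynomial (Fin n) R)
    (P : MvPolynomial (Fin (n + 1)) R) (a : Fin n → R) :
    eval a (bind₁ (Fin.snoc X f) P) = eval (Fin.snoc a (eval a f)) P := by
  have hφ : (fun i => eval a ((Fin.snoc X f : Fin (n + 1) → MvPolynomial (Fin n) R) i)) =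
      Fin.snoc a (eval a f) := by
    funext i
    refine Fin.lastCases ?_ (fun j => ?_) i <;> simp
  rw [← hφ]
  exact eval₂Hom_bind₁ _ _ _ _

theorem card_zeros_le_totalDegree_mul_card_pow [IsDomain R] [DecidableEq R] {n : ℕ}
    {p : MvPolynomial (Fin n) R} (hp : p ≠ 0) (S : Finset R) :
    #{x ∈ Fintype.piFinset fun _ ↦ S | eval x p = 0} ≤ p.totalDegree * #S ^ (n - 1) := by
  rcases n with _ | n
  · rw [p.eq_C_of_isEmpty] at hp ⊢
    simp_all
  obtain hS | hS := S.eq_empty_or_nonempty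
  · simp [hS]
  have hSZ := schwartz_zippel_totalDegree hp S
  rw [div_le_div_iff₀ (pow_pos (by simpa using hS) _) (by simpa using hS), pow_succ,
    ← mul_assoc] at hSZ
  exact le_of_mul_le_mul_right (by exact_mod_cast hSZ) hS.card_pos

end MvPolynomial

theorem linear_factor_dvd_of_many_agreements_multivariate_general
    (F : Type*) [Field F] (H : Finset F) (h k d m l t : ℕ)
    (hH : H.card = h) (ht : t > (m + l * d) * h ^ (k - 1))
    (g : (Fin k → F) → F)
    (P : MvPolynomial (Fin (k + 1)) F)
    (hPdeg : P.weightedTotalDegree (Fin.snoc (fun _ : Fin k => 1) d) ≤ m + l * d)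
    (hPvan : ∀ a : Fin k → F, (∀ i, a i ∈ H) →
      MvPolynomial.eval (Fin.snoc a (g a)) P = 0)
    (f : MvPolynomial (Fin k) F) (hf : f.totalDegree ≤ d)
    (hagree : ∃ s : Finset (Fin k → F), t ≤ s.card ∧
      (∀ a ∈ s, ∀ i, a i ∈ H) ∧ ∀ a ∈ s, MvPolynomial.eval a f = g a) :
    (MvPolynomial.X (Fin.last k) - MvPolynomial.rename Fin.castSucc f) ∣ P := by
  classical
  obtain ⟨s, hts, hsH, hsg⟩ := hagree
  refine X_last_sub_rename_dvd_of_bind₁_snoc_eq_zero (by_contra fun hQ => ?_)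
  have hQdeg : (bind₁ (Fin.snoc X f) P).totalDegree ≤ m + l * d := by
    refine (totalDegree_bind₁_le_weightedTotalDegree (fun i => ?_) P).trans hPdeg
    refine Fin.lastCases ?_ (fun j => ?_) i
    · simpa using hf
    · simp
  have hs_zeros :
      s ⊆ {a ∈ Fintype.piFinset fun _ : Fin k ↦ H | eval a (bind₁ (Fin.snoc X f) P) = 0} :=
    fun a ha => by
      rw [mem_filter, Fintype.mem_piFinset, eval_bind₁_snoc_X, hsg a ha]
      exact ⟨hsH a ha, hPvan a (hsH a ha)⟩
  have hcard := (card_le_card hs_zeros).trans (card_zeros_le_totalDegree_mul_card_pow hQ H)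
  rw [hH] at hcard
  exact (hts.trans (hcard.trans (Nat.mul_le_mul_right _ hQdeg))).not_gt ht

/-- **Proposition 5.** Suppose `t > (m + l·d)·h^{k−1}` where `|H| = h`. If `P` is a nonzero
polynomial in `F[x₁,…,x_k,y]` of `(1,…,1,d)`-weighted degree at most `m + l·d` vanishing at
`(a, g(a))` for all `a ∈ H^k`, and `f ∈ F[x₁,…,x_k]` has total degree at most `d` and
agrees with `g` on at least `t` points of `H^k`, then `y − f(x₁,…,x_k)` divides
`P(x₁,…,x_k,y)`. -/
theorem linear_factor_dvd_of_many_agreements_multivariate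
    (F : Type*) [Field F] (H : Finset F) (h k d m l t : ℕ)
    (hH : H.card = h) (ht : t > (m + l * d) * h ^ (k - 1))
    (g : (Fin k → F) → F)
    (P : MvPolynomial (Fin (k + 1)) F) (hP0 : P ≠ 0)
    (hPdeg : P.weightedTotalDegree (Fin.snoc (fun _ : Fin k => 1) d) ≤ m + l * d)
    (hPvan : ∀ a : Fin k → F, (∀ i, a i ∈ H) →
      MvPolynomial.eval (Fin.snoc a (g a)) P = 0)
    (f : MvPolynomial (Fin k) F) (hf : f.totalDegree ≤ d)
    (hagree : ∃ s : Finset (Fin k → F), t ≤ s.card ∧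
      (∀ a ∈ s, ∀ i, a i ∈ H) ∧ ∀ a ∈ s, MvPolynomial.eval a f = g a) :
    (MvPolynomial.X (Fin.last k) - MvPolynomial.rename Fin.castSucc f) ∣ P :=
  linear_factor_dvd_of_many_agreements_multivariate_general F H h k d m l t hH ht g P hPdeg hPvan f
    hf hagree
end

section
/- (Schwartz–Zippel) Let F be a field, p ∈ F[x₁,…,x_n] a multivariate polynomial of total degree at most d that is not identically zero, and S a nonempty finite subset of F. Then the number of points a ∈ S^n with p(a) = 0 is at most d·|S|^{n−1}; equivalently, for a uniformly random a ∈ S^n, the probability that p(a) = 0 is at most d/|S|. -/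
open MvPolynomial Finset

theorem schwartz_zippel_aux (F : Type*) [Field F] [DecidableEq F] (S : Finset F) :
    ∀ n, ∀ d, ∀ p : MvPolynomial (Fin n) F, p ≠ 0 → p.totalDegree ≤ d →
    ((Fintype.piFinset fun _ : Fin n => S).filter
        fun a => MvPolynomial.eval a p = 0).card ≤ d * S.card ^ (n - 1) := by
  intro n
  induction n with
  | zero =>
    intro d p hp _
    have : ((Fintype.piFinset fun _ : Fin 0 => S).filter
        fun a => MvPolynomial.eval a p = 0).card = 0 := by
      rw [Finset.card_eq_zero, Finset.filter_eq_empty_iff]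
      intro a _
      obtain ⟨r, rfl⟩ := MvPolynomial.C_surjective (Fin 0) p
      simp only [eval_C]
      exact fun h => hp (by rw [h, map_zero])
    omega
  | succ n ih =>
    intro d p hp hdeg
    set q := finSuccEquiv F n p with hq_def
    have hq : q ≠ 0 := by
      simp only [hq_def, ne_eq, EmbeddingLike.map_eq_zero_iff]
      exact hp
    set k := q.natDegree with hk_def
    have hk : k ≤ d := by
      have h1 : k = degreeOf 0 p := natDegree_finSuccEquiv p
      have h2 := degreeOf_le_totalDegree p 0
      omega
    set c := q.leadingCoeff with hc_def
    have hc : c ≠ 0 := Polynomial.leadingCoeff_ne_zero.2 hq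
    have hcd : c.totalDegree ≤ d - k := by
      have h := totalDegree_coeff_finSuccEquiv_add_le p k hc
      have hcc : (finSuccEquiv F n p).coeff k = c := rfl
      rw [hcc] at h
      omega
    set A := Fintype.piFinset fun _ : Fin n => S with hA_def
    have hAcard : A.card = S.card ^ n := by
      rw [hA_def, Fintype.card_piFinset]
      simp
    -- the main subset bound
    have hsub : (Fintype.piFinset fun _ : Fin (n+1) => S).filter (fun a => eval a p = 0) ⊆
        A.biUnion fun a => (S.filter fun y => eval (Fin.cons y a) p = 0).image
          (fun y => Fin.cons y a) := by
      intro x hx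
      simp only [mem_filter, Fintype.mem_piFinset] at hx
      rw [mem_biUnion]
      refine ⟨Fin.tail x, by simp only [hA_def, Fintype.mem_piFinset]; intro i; exact hx.1 _, ?_⟩
      rw [mem_image]
      refine ⟨x 0, ?_, Fin.cons_self_tail x⟩
      rw [mem_filter, Fin.cons_self_tail]
      exact ⟨hx.1 0, hx.2⟩
    have hcard1 : ((Fintype.piFinset fun _ : Fin (n+1) => S).filter
        (fun a => eval a p = 0)).card ≤
        ∑ a ∈ A, (S.filter fun y => eval (Fin.cons y a) p = 0).card := by
      refine (Finset.card_le_card hsub).trans ?_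
      refine (Finset.card_biUnion_le).trans ?_
      exact Finset.sum_le_sum fun a _ => Finset.card_image_le
    -- split over whether the leading coefficient vanishes
    have hsplit := Finset.sum_filter_add_sum_filter_not A (fun a => eval a c = 0)
      (fun a => (S.filter fun y => eval (Fin.cons y a) p = 0).card)
    -- bound on the bad part
    have hbad : ∑ a ∈ A.filter (fun a => eval a c = 0),
        (S.filter fun y => eval (Fin.cons y a) p = 0).card ≤ (d - k) * S.card ^ n := by
      calc ∑ a ∈ A.filter (fun a => eval a c = 0),
          (S.filter fun y => eval (Fin.cons y a) p = 0).card
          ≤ ∑ _a ∈ A.filter (fun a => eval a c = 0), S.card :=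
            Finset.sum_le_sum fun a _ => Finset.card_filter_le _ _
        _ = (A.filter (fun a => eval a c = 0)).card * S.card := by
            rw [Finset.sum_const, smul_eq_mul]
        _ ≤ (d - k) * S.card ^ n := by
            rcases Nat.eq_zero_or_pos n with rfl | hn
            · have : (A.filter (fun a => eval a c = 0)).card = 0 := by
                rw [Finset.card_eq_zero, Finset.filter_eq_empty_iff]
                intro a _
                obtain ⟨r, hr⟩ := MvPolynomial.C_surjective (Fin 0) c
                rw [← hr]
                simp only [eval_C]
                exact fun h => hc (by rw [← hr, h, map_zero])
              simp [this]
            · have h1 : (A.filter (fun a => eval a c = 0)).card * S.card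
                  ≤ ((d - k) * S.card ^ (n - 1)) * S.card :=
                Nat.mul_le_mul_right _ (ih (d - k) c hc hcd)
              refine h1.trans ?_
              rw [mul_assoc, ← pow_succ]
              have : n - 1 + 1 = n := by omega
              rw [this]
    -- bound on the good part
    have hgood : ∑ a ∈ A.filter (fun a => ¬ eval a c = 0),
        (S.filter fun y => eval (Fin.cons y a) p = 0).card ≤ k * S.card ^ n := by
      have hpt : ∀ a ∈ A.filter (fun a => ¬ eval a c = 0),
          (S.filter fun y => eval (Fin.cons y a) p = 0).card ≤ k := by
        intro a ha
        rw [mem_filter] at ha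
        set pa := q.map (eval a) with hpa_def
        have hpa : pa ≠ 0 := by
          intro h
          apply ha.2
          have : pa.coeff k = eval a c := by
            rw [hpa_def, Polynomial.coeff_map]; rfl
          rw [h, Polynomial.coeff_zero] at this
          exact this.symm
        have hdegpa : pa.natDegree ≤ k := Polynomial.natDegree_map_le
        have hsub2 : (S.filter fun y => eval (Fin.cons y a) p = 0) ⊆ pa.roots.toFinset := by
          intro y hy
          rw [mem_filter] at hy
          rw [Multiset.mem_toFinset, Polynomial.mem_roots hpa]
          rw [eval_eq_eval_mv_eval'] at hy
          exact hy.2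
        calc (S.filter fun y => eval (Fin.cons y a) p = 0).card
            ≤ pa.roots.toFinset.card := Finset.card_le_card hsub2
          _ ≤ Multiset.card pa.roots := Multiset.toFinset_card_le _
          _ ≤ pa.natDegree := Polynomial.card_roots' pa
          _ ≤ k := hdegpa
      calc ∑ a ∈ A.filter (fun a => ¬ eval a c = 0),
          (S.filter fun y => eval (Fin.cons y a) p = 0).card
          ≤ ∑ _a ∈ A.filter (fun a => ¬ eval a c = 0), k := Finset.sum_le_sum hpt
        _ = (A.filter (fun a => ¬ eval a c = 0)).card * k := by
            rw [Finset.sum_const, smul_eq_mul]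
        _ ≤ A.card * k := Nat.mul_le_mul_right _ (Finset.card_filter_le _ _)
        _ = k * S.card ^ n := by rw [hAcard, Nat.mul_comm]
    have : ((Fintype.piFinset fun _ : Fin (n+1) => S).filter (fun a => eval a p = 0)).card
        ≤ (d - k) * S.card ^ n + k * S.card ^ n := by
      rw [← hsplit] at hcard1
      omega
    calc ((Fintype.piFinset fun _ : Fin (n+1) => S).filter (fun a => eval a p = 0)).card
        ≤ (d - k) * S.card ^ n + k * S.card ^ n := this
      _ = d * S.card ^ n := by rw [← Nat.add_mul]; congr 1; omega
      _ = d * S.card ^ (n + 1 - 1) := by simp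

/-- **Schwartz–Zippel lemma.** If `p ∈ F[x₁,…,x_n]` is a nonzero polynomial of total
degree at most `d` and `S ⊆ F` is a nonempty finite set, then the number of points
`a ∈ S^n` with `p(a) = 0` is at most `d·|S|^{n−1}`. -/
theorem schwartz_zippel
    (F : Type*) [Field F] [DecidableEq F] (n d : ℕ)
    (p : MvPolynomial (Fin n) F) (hp : p ≠ 0) (hdeg : p.totalDegree ≤ d)
    (S : Finset F) (hS : S.Nonempty) :
    ((Fintype.piFinset fun _ : Fin n => S).filter
        fun a => MvPolynomial.eval a p = 0).card ≤ d * S.card ^ (n - 1) :=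
  schwartz_zippel_aux F S n d p hp hdeg
end

section
/- Let F be a field, S a nonempty finite subset of F, and p ∈ F[x₁,…,x_n] a multivariate polynomial of total degree at most d. If the number of points a ∈ S^n with p(a) = 0 is strictly greater than d·|S|^{n−1}, then p is identically zero. -/
open MvPolynomial

open Finset Fintype in
theorem MvPolynomial.card_zeros_mul_card_le_totalDegree_mul {R : Type*} [CommRing R] [IsDomain R]
    [DecidableEq R] {n : ℕ} {p : MvPolynomial (Fin n) R} (hp : p ≠ 0) (S : Finset R) :
    #{x ∈ piFinset fun _ ↦ S | eval x p = 0} * #S ≤ p.totalDegree * #S ^ n := by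
  obtain rfl | hS := S.eq_empty_or_nonempty
  · simp
  have hS₀ : (0 : ℚ≥0) < #S := by exact_mod_cast hS.card_pos
  have h := schwartz_zippel_totalDegree hp S
  rw [div_le_div_iff₀ (by positivity) hS₀] at h
  exact_mod_cast h

/-- **Contrapositive of Schwartz–Zippel.** If `p ∈ F[x₁,…,x_n]` has total degree at most
`d` and vanishes at strictly more than `d·|S|^{n−1}` points of `S^n` for a nonempty finite
set `S ⊆ F`, then `p` is identically zero. -/
theorem eq_zero_of_many_roots_schwartz_zippel
    (F : Type*) [Field F] [DecidableEq F] (n d : ℕ)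
    (S : Finset F) (hS : S.Nonempty)
    (p : MvPolynomial (Fin n) F) (hdeg : p.totalDegree ≤ d)
    (hroots : ((Fintype.piFinset fun _ : Fin n => S).filter
        fun a => MvPolynomial.eval a p = 0).card > d * S.card ^ (n - 1)) :
    p = 0 := by
  by_contra hp
  have hcard : 0 < S.card := hS.card_pos
  refine hroots.not_ge (Nat.le_of_mul_le_mul_right ?_ hcard)
  calc _ ≤ p.totalDegree * S.card ^ n := card_zeros_mul_card_le_totalDegree_mul hp S
    _ ≤ d * (S.card ^ (n - 1) * S.card) := by
      -- `n ≤ n - 1 + 1` also holds for `n = 0`, where `S.card ^ 0 ≤ S.card` needs `S` nonempty.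
      rw [← pow_succ]
      exact Nat.mul_le_mul hdeg (Nat.pow_le_pow_right hcard (by omega))
    _ = d * S.card ^ (n - 1) * S.card := (mul_assoc ..).symm
end
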